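/- arXiv:1710.04910 — 2 statements merged into one kernel-verified Lean document; each statement's English description precedes it below -/
import Mathlib

section
/- Let G be a topological group isomorphic (as topological groups) to V × T, where V is a finite-dimensional real vector space and T is a torus (a product of circle groups). If γ : ℝ → G is a continuous injective homomorphism whose projection to V is t ↦ t·v with v ≠ 0, then the image γ(ℝ) is closed in G. -/
/-- Let `G = V × T` with `V` a finite-dimensional real vector space and `T` a torus.
If `γ : ℝ → G` is a continuous injective homomorphism whose projection to `V` is
`t ↦ t • v` with `v ≠ 0`, then the image `γ(ℝ)` is closed in `G`. -/
theorem stmt_3 {V : Type*} [NormedAddCommGroup V] [NormedSpace ℝ V] [FiniteDimensional ℝ V]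
    (n : ℕ) (γ : ℝ →+ V × (Fin n → AddCircle (1 : ℝ)))
    (hcont : Continuous γ) (hinj : Function.Injective γ)
    (v : V) (hv : v ≠ 0) (hproj : ∀ t : ℝ, (γ t).1 = t • v) :
    IsClosed (Set.range γ) := by
  have hsmul : IsProperMap (fun t : ℝ => t • v) :=
    (isClosedEmbedding_smul_left hv).isProperMap
  have hcomp : IsProperMap (Prod.fst ∘ (γ : ℝ → V × (Fin n → AddCircle (1 : ℝ)))) := by
    have : (Prod.fst ∘ (γ : ℝ → V × (Fin n → AddCircle (1 : ℝ)))) = fun t : ℝ => t • v := by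
      funext t; exact hproj t
    rw [this]; exact hsmul
  have hproper : IsProperMap (γ : ℝ → V × (Fin n → AddCircle (1 : ℝ))) :=
    isProperMap_of_comp_of_t2 hcont continuous_fst hcomp
  exact hproper.isClosed_range
end

section
/- Let V be a finite-dimensional real vector space, T a compact torus, and G = V × T. Let γ : ℝ → G be a continuous homomorphism, γ(t) = (tv, τ(t)). If v ≠ 0, then for every h ∈ closure(γ(ℝ)) there exists t₀ > 0 with h ∈ γ([-t₀, t₀]); consequently closure(γ(ℝ)) = γ(ℝ), i.e., the image of γ is closed. -/
/-- Let `G = V × T` with `V` a finite-dimensional real vector space and `T` a compact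
torus, and `γ : ℝ → G` a continuous homomorphism with `γ t = (t • v, τ t)`. If `v ≠ 0`,
then every `h` in the closure of `γ(ℝ)` lies in `γ([-t₀, t₀])` for some `t₀ > 0`;
consequently the image of `γ` is closed. -/
theorem stmt_18 {V : Type*} [NormedAddCommGroup V] [NormedSpace ℝ V] [FiniteDimensional ℝ V]
    (n : ℕ) (γ : ℝ →+ V × (Fin n → AddCircle (1 : ℝ))) (hcont : Continuous γ)
    (v : V) (hv : v ≠ 0) (hproj : ∀ t : ℝ, (γ t).1 = t • v) :
    (∀ h ∈ closure (Set.range γ), ∃ t₀ : ℝ, 0 < t₀ ∧ h ∈ γ '' Set.Icc (-t₀) t₀) ∧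
    closure (Set.range γ) = Set.range γ := by
  have hvpos : 0 < ‖v‖ := norm_pos_iff.mpr hv
  have key : ∀ h ∈ closure (Set.range γ), ∃ t₀ : ℝ, 0 < t₀ ∧ h ∈ γ '' Set.Icc (-t₀) t₀ := by
    intro h hh
    set t₀ : ℝ := ‖h.1‖ / ‖v‖ + 1 with ht₀def
    have ht₀pos : 0 < t₀ := by positivity
    refine ⟨t₀, ht₀pos, ?_⟩
    -- the open set U of points with small first coordinate
    set U : Set (V × (Fin n → AddCircle (1 : ℝ))) := {x | ‖x.1‖ < t₀ * ‖v‖} with hUdef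
    have hUopen : IsOpen U := by
      have : Continuous fun x : V × (Fin n → AddCircle (1 : ℝ)) => ‖x.1‖ :=
        continuous_fst.norm
      exact isOpen_lt this continuous_const
    have hhU : h ∈ U := by
      simp only [hUdef, Set.mem_setOf_eq, ht₀def]
      have : (‖h.1‖ / ‖v‖ + 1) * ‖v‖ = ‖h.1‖ + ‖v‖ := by
        field_simp
      rw [this]
      linarith
    -- h is in the closure of range γ ∩ U
    have hmem : h ∈ closure (Set.range γ ∩ U) := by
      rw [mem_closure_iff_nhds] at hh ⊢
      intro s hs
      obtain ⟨x, hx1, hx2⟩ := hh (s ∩ U) (Filter.inter_mem hs (hUopen.mem_nhds hhU))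
      exact ⟨x, hx1.1, hx2, hx1.2⟩
    -- range γ ∩ U ⊆ γ '' Icc (-t₀) t₀
    have hsub : Set.range γ ∩ U ⊆ γ '' Set.Icc (-t₀) t₀ := by
      rintro x ⟨⟨t, rfl⟩, hxU⟩
      refine ⟨t, ?_, rfl⟩
      have hn : ‖(γ t).1‖ = |t| * ‖v‖ := by
        rw [hproj t, norm_smul, Real.norm_eq_abs]
      have hlt : |t| * ‖v‖ < t₀ * ‖v‖ := by
        rw [← hn]; exact hxU
      have habs : |t| < t₀ := lt_of_mul_lt_mul_right hlt (le_of_lt hvpos)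
      rw [abs_lt] at habs
      exact ⟨le_of_lt habs.1, le_of_lt habs.2⟩
    have hcompact : IsCompact (γ '' Set.Icc (-t₀) t₀) :=
      isCompact_Icc.image hcont
    have hclosed : IsClosed (γ '' Set.Icc (-t₀) t₀) := hcompact.isClosed
    exact hclosed.closure_subset ((closure_mono hsub) hmem)
  refine ⟨key, ?_⟩
  apply Set.Subset.antisymm _ subset_closure
  intro h hh
  obtain ⟨t₀, _, t, _, rfl⟩ := key h hh
  exact ⟨t, rfl⟩
end
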